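/- arXiv:2101.02173 — 7 statements merged into one kernel-verified Lean document; each statement's English description precedes it below -/
import Mathlib

section
/- The function g(y) = ((1 + y^2)/y)·arctan(y) is strictly increasing on (0, ∞), and tends to 1 as y → 0⁺ and to +∞ as y → +∞. Consequently, for every c > 0 and every λ < -c there exists a unique y > 0 such that c·arctan(y) = -λ·y/(1 + y^2), and no such y > 0 exists when λ ≥ -c. -/
open Real Set Filter Topology

/-!
Write `g y = (1 + y²) / y * arctan y`. Its derivative is `((y² - 1) arctan y + y) / y²`, which is
positive: trivially for `y ≥ 1`, and from `arctan y < y` for `y < 1`. Near `0`, `arctan y / y` is the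
difference quotient of `arctan` at `0`, so `g → 1`; at infinity `g ≥ y · arctan y → ∞`. A strictly
increasing continuous function on `(0, ∞)` with these limits is `> 1` and takes every value above `1`
exactly once, and `c · arctan y = -λ y / (1 + y²)` says precisely `g y = -λ / c`.
-/

section LimitAtLeftEndpoint

variable {α β : Type*} [TopologicalSpace α] [LinearOrder β] [TopologicalSpace β]
  [OrderClosedTopology β] {f : α → β} {a : α} {l : β}

theorem StrictMonoOn.lt_of_tendsto_nhdsGT [LinearOrder α] [OrderTopology α] [DenselyOrdered α]
    (hf : StrictMonoOn f (Ioi a)) (hl : Tendsto f (𝓝[>] a) (𝓝 l)) {y : α} (hy : a < y) :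
    l < f y := by
  obtain ⟨z, haz, hzy⟩ := exists_between hy
  have := nhdsGT_neBot_of_exists_gt ⟨z, haz⟩
  have hlz : l ≤ f z := by
    refine le_of_tendsto hl ?_
    filter_upwards [Ioo_mem_nhdsGT haz] with x hx
    exact (hf hx.1 haz hx.2).le
  exact hlz.trans_lt (hf haz hy hzy)

theorem StrictMonoOn.existsUnique_eq_of_tendsto [ConditionallyCompleteLinearOrder α]
    [OrderTopology α] [DenselyOrdered α] [NoMaxOrder α] (hf : StrictMonoOn f (Ioi a))
    (hcont : ContinuousOn f (Ioi a)) (hl : Tendsto f (𝓝[>] a) (𝓝 l))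
    (htop : Tendsto f atTop atTop) {t : β} (ht : l < t) : ∃! y, a < y ∧ f y = t := by
  obtain ⟨p, hap, hpt⟩ : ∃ p, a < p ∧ f p < t :=
    (eventually_mem_nhdsWithin.and (hl.eventually_lt_const ht)).exists
  obtain ⟨q, hpq, htq⟩ : ∃ q, p ≤ q ∧ t ≤ f q :=
    ((eventually_ge_atTop p).and (htop.eventually_ge_atTop t)).exists
  have hsub : Icc p q ⊆ Ioi a := fun x hx => hap.trans_le hx.1
  obtain ⟨y, hy, rfl⟩ := intermediate_value_Icc hpq (hcont.mono hsub) ⟨hpt.le, htq⟩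
  exact ⟨y, ⟨hsub hy, rfl⟩, fun z ⟨haz, hz⟩ => hf.injOn haz (hsub hy) hz⟩

end LimitAtLeftEndpoint

theorem Real.arctan_lt_self {x : ℝ} (hx : 0 < x) : arctan x < x := by
  have h := lt_tan (arctan_pos.mpr hx) (arctan_lt_pi_div_two x)
  rwa [tan_arctan] at h

noncomputable def arctanRatio (y : ℝ) : ℝ := (1 + y ^ 2) / y * arctan y

theorem hasDerivAt_arctanRatio {y : ℝ} (hy : y ≠ 0) :
    HasDerivAt arctanRatio (((y ^ 2 - 1) * arctan y + y) / y ^ 2) y := by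
  have hsq : HasDerivAt (fun y : ℝ => 1 + y ^ 2) (2 * y) y := by
    simpa using (hasDerivAt_pow 2 y).const_add 1
  refine ((hsq.fun_div (hasDerivAt_id' y) hy).mul (hasDerivAt_arctan y)).congr_deriv ?_
  field_simp
  ring

theorem continuousOn_arctanRatio : ContinuousOn arctanRatio (Ioi 0) :=
  fun _ hy => (hasDerivAt_arctanRatio (ne_of_gt hy)).continuousAt.continuousWithinAt

theorem sq_sub_one_mul_arctan_add_self_pos {y : ℝ} (hy : 0 < y) :
    0 < (y ^ 2 - 1) * arctan y + y := by
  have hpos := arctan_pos.mpr hy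
  rcases le_or_gt 1 y with h1 | h1
  · nlinarith [mul_nonneg (by nlinarith : (0:ℝ) ≤ y ^ 2 - 1) hpos.le]
  · nlinarith [arctan_lt_self hy]

theorem strictMonoOn_arctanRatio : StrictMonoOn arctanRatio (Ioi 0) := by
  refine strictMonoOn_of_deriv_pos (convex_Ioi 0) continuousOn_arctanRatio fun y hy => ?_
  rw [interior_Ioi, mem_Ioi] at hy
  rw [(hasDerivAt_arctanRatio hy.ne').deriv]
  exact div_pos (sq_sub_one_mul_arctan_add_self_pos hy) (by positivity)

theorem tendsto_arctanRatio_nhdsGT_zero : Tendsto arctanRatio (𝓝[>] 0) (𝓝 1) := by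
  have hslope := (hasDerivAt_arctan 0).tendsto_slope_zero_right
  have hsq : Tendsto (fun y : ℝ => 1 + y ^ 2) (𝓝[>] 0) (𝓝 1) :=
    ((by fun_prop : Continuous fun y : ℝ => 1 + y ^ 2).tendsto' 0 1 (by norm_num)).mono_left
      nhdsWithin_le_nhds
  convert hsq.mul hslope using 2
  · simp only [arctanRatio, zero_add, arctan_zero, sub_zero, smul_eq_mul]
    ring
  · norm_num

theorem tendsto_arctanRatio_atTop : Tendsto arctanRatio atTop atTop := by
  have hfac : Tendsto (fun y : ℝ => (1 + y ^ 2) / y) atTop atTop := by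
    refine tendsto_atTop_mono' _ ?_ tendsto_id
    filter_upwards [eventually_gt_atTop 0] with y hy
    rw [id, le_div_iff₀ hy]
    nlinarith
  exact hfac.atTop_mul_pos (by positivity) (tendsto_nhds_of_tendsto_nhdsWithin tendsto_arctan_atTop)

theorem mul_arctan_eq_iff_arctanRatio_eq {c lam y : ℝ} (hc : 0 < c) (hy : 0 < y) :
    c * arctan y = -lam * y / (1 + y ^ 2) ↔ arctanRatio y = -lam / c := by
  rw [arctanRatio, eq_div_iff (by positivity), eq_div_iff hc.ne', div_mul_eq_mul_div,
    div_mul_eq_mul_div, div_eq_iff hy.ne']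
  constructor <;> intro h <;> linear_combination h

theorem stmt_1 :
    StrictMonoOn (fun y : ℝ => ((1 + y ^ 2) / y) * arctan y) (Ioi 0) ∧
    Tendsto (fun y : ℝ => ((1 + y ^ 2) / y) * arctan y) (nhdsWithin 0 (Ioi 0)) (nhds 1) ∧
    Tendsto (fun y : ℝ => ((1 + y ^ 2) / y) * arctan y) atTop atTop ∧
    (∀ c lam : ℝ, 0 < c →
      (lam < -c → ∃! y : ℝ, 0 < y ∧ c * arctan y = -lam * y / (1 + y ^ 2)) ∧
      (-c ≤ lam → ¬ ∃ y : ℝ, 0 < y ∧ c * arctan y = -lam * y / (1 + y ^ 2))) := by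
  refine ⟨strictMonoOn_arctanRatio, tendsto_arctanRatio_nhdsGT_zero, tendsto_arctanRatio_atTop,
    fun c lam hc => ⟨fun hlam => ?_, ?_⟩⟩
  · have hlevel : 1 < -lam / c := (one_lt_div hc).mpr (by linarith)
    obtain ⟨y, ⟨hy, hgy⟩, huniq⟩ := strictMonoOn_arctanRatio.existsUnique_eq_of_tendsto
      continuousOn_arctanRatio tendsto_arctanRatio_nhdsGT_zero tendsto_arctanRatio_atTop hlevel
    refine ⟨y, ⟨hy, (mul_arctan_eq_iff_arctanRatio_eq hc hy).mpr hgy⟩, ?_⟩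
    rintro z ⟨hz, hgz⟩
    exact huniq z ⟨hz, (mul_arctan_eq_iff_arctanRatio_eq hc hz).mp hgz⟩
  · rintro hlam ⟨y, hy, hgy⟩
    have hgt : 1 < arctanRatio y :=
      strictMonoOn_arctanRatio.lt_of_tendsto_nhdsGT tendsto_arctanRatio_nhdsGT_zero hy
    rw [(mul_arctan_eq_iff_arctanRatio_eq hc hy).mp hgy, one_lt_div hc] at hgt
    linarith
end

section
/- If φ : ℝ → ℝ satisfies 0 < φ(x) ≤ π for all x in an interval I and φ is not identically π, then the integrand (-sin(φ(x)) + cos(φ(x))·φ(x))·φ(x) is nonpositive on I, and is strictly negative wherever 0 < φ(x) < π. Consequently, ∫_I (-sin(φ) + cos(φ)·φ)·φ dx < 0 whenever φ takes a value in (0, π) on a set of positive measure. -/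
open Real Set MeasureTheory

lemma key_neg : ∀ t : ℝ, 0 < t → t ≤ π → (-Real.sin t + Real.cos t * t) * t < 0 := by
  intro t ht hπ
  have h : Real.cos t * t - Real.sin t < 0 := by
    rcases lt_or_ge t (π/2) with h2 | h2
    · have htan := Real.lt_tan ht h2
      have hc : 0 < Real.cos t := Real.cos_pos_of_mem_Ioo ⟨by linarith [Real.pi_pos], h2⟩
      have : t * Real.cos t < Real.tan t * Real.cos t := by
        exact mul_lt_mul_of_pos_right htan hc
      rw [Real.tan_eq_sin_div_cos, div_mul_cancel₀ _ (ne_of_gt hc)] at this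
      nlinarith
    · rcases lt_or_eq_of_le hπ with hlt | heq
      · have hs : 0 < Real.sin t := Real.sin_pos_of_pos_of_lt_pi ht hlt
        have hc : Real.cos t ≤ 0 := Real.cos_nonpos_of_pi_div_two_le_of_le h2 (by linarith [Real.pi_pos])
        nlinarith
      · subst heq; simp [Real.cos_pi]; positivity
  nlinarith

theorem stmt_5 (φ : ℝ → ℝ) (I : Set ℝ) (hI : MeasurableSet I)
    (hφ : ContinuousOn φ I)
    (hrange : ∀ x ∈ I, 0 < φ x ∧ φ x ≤ π) :
    (∀ x ∈ I, (-sin (φ x) + cos (φ x) * φ x) * φ x ≤ 0) ∧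
    (∀ x ∈ I, φ x < π → (-sin (φ x) + cos (φ x) * φ x) * φ x < 0) ∧
    (0 < volume {x ∈ I | φ x < π} →
      IntegrableOn (fun x => (-sin (φ x) + cos (φ x) * φ x) * φ x) I →
      ∫ x in I, (-sin (φ x) + cos (φ x) * φ x) * φ x < 0) := by
  have hneg : ∀ x ∈ I, (-sin (φ x) + cos (φ x) * φ x) * φ x < 0 := fun x hx =>
    key_neg (φ x) (hrange x hx).1 (hrange x hx).2
  refine ⟨fun x hx => (hneg x hx).le, fun x hx _ => hneg x hx, fun hvol hint => ?_⟩
  set f : ℝ → ℝ := fun x => (-sin (φ x) + cos (φ x) * φ x) * φ x with hf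
  have hgint : IntegrableOn (fun x => -f x) I := hint.neg
  have hnn : 0 ≤ᵐ[volume.restrict I] fun x => -f x := by
    filter_upwards [MeasureTheory.ae_restrict_mem hI] with x hx
    exact le_of_lt (by simpa using neg_pos.mpr (hneg x hx))
  have hpos : 0 < ∫ x in I, -f x := by
    rw [MeasureTheory.setIntegral_pos_iff_support_of_nonneg_ae hnn hgint]
    refine lt_of_lt_of_le hvol (measure_mono ?_)
    intro x hx
    exact ⟨fun h0 => absurd (neg_eq_zero.mp h0) (ne_of_lt (hneg x hx.1)), hx.1⟩
  rw [MeasureTheory.integral_neg] at hpos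
  linarith
end

section
/- The function F(y) = -((1 + y²)/y)·(2·arctan(y) - arctan(1/y)) is strictly decreasing on (0, ∞), has a unique zero y* ∈ (0,1), and satisfies F(y) → +∞ as y → 0⁺ and F(y) → -∞ as y → +∞. In particular, for every λ ∈ ℝ there exists a unique y > 0 with F(y) = λ, and F(1) = -π/2. -/
/-!
For `y > 0` we have `arctan (1 / y) = π / 2 - arctan y`, so
`F y = (1 + y ^ 2) / y * (π / 2 - 3 * arctan y)`. Hence `F` vanishes exactly where
`arctan y = π / 6`, i.e. at `y = tan (π / 6) = 1 / √3`, and `F 1 = 2 * (π / 2 - 3 * π / 4)`.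
The derivative is `((y ^ 2 - 1) * (π / 2 - 3 * arctan y) - 3 * y) / y ^ 2`, which is negative:
for `y ≥ 1` both factors of the product have opposite signs, and for `y < 1` the product is
below `3 * arctan y ≤ 3 * y`. The limits at `0⁺` and `+∞` come from `(1 + y ^ 2) / y → +∞`
while the second factor tends to `π / 2` and `-π`, and strict monotonicity, continuity and the
intermediate value theorem give the bijection onto `ℝ`.
-/

open Real Set Filter

noncomputable def kinkProfile (y : ℝ) : ℝ :=
  -((1 + y ^ 2) / y) * (2 * arctan y - arctan (1 / y))

lemma kinkProfile_eq {y : ℝ} (hy : 0 < y) :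
    kinkProfile y = (1 + y ^ 2) / y * (π / 2 - 3 * arctan y) := by
  rw [kinkProfile, one_div, arctan_inv_of_pos hy]
  ring

lemma hasDerivAt_kinkProfile {y : ℝ} (hy : 0 < y) :
    HasDerivAt kinkProfile (((y ^ 2 - 1) * (π / 2 - 3 * arctan y) - 3 * y) / y ^ 2) y := by
  have hnum : HasDerivAt (fun y : ℝ => 1 + y ^ 2) (2 * y) y := by
    simpa using (hasDerivAt_pow 2 y).const_add 1
  have hu := hnum.div (hasDerivAt_id' y) hy.ne'
  have hv : HasDerivAt (fun y : ℝ => π / 2 - 3 * arctan y) (-(3 * (1 / (1 + y ^ 2)))) y :=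
    ((hasDerivAt_arctan y).const_mul 3).const_sub (π / 2)
  have hF : kinkProfile =ᶠ[nhds y] fun y => (1 + y ^ 2) / y * (π / 2 - 3 * arctan y) := by
    filter_upwards [Ioi_mem_nhds hy] with x hx using kinkProfile_eq hx
  refine ((hu.mul hv).congr_deriv ?_).congr_of_eventuallyEq hF
  simp only [Pi.div_apply]
  field_simp
  ring

lemma arctan_le_self {x : ℝ} (hx : 0 ≤ x) : arctan x ≤ x := by
  simpa using le_tan (arctan_nonneg.2 hx) (arctan_lt_pi_div_two x)

lemma sq_sub_one_mul_pi_div_two_sub_three_arctan_lt {y : ℝ} (hy : 0 < y) :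
    (y ^ 2 - 1) * (π / 2 - 3 * arctan y) < 3 * y := by
  rcases le_or_gt 1 y with h1 | h1
  · have : π / 4 ≤ arctan y := arctan_one ▸ arctan_strictMono.monotone h1
    nlinarith [mul_nonpos_of_nonneg_of_nonpos (by nlinarith : 0 ≤ y ^ 2 - 1)
      (by linarith [pi_pos] : π / 2 - 3 * arctan y ≤ 0)]
  · have hc : 3 * arctan y - π / 2 < 3 * y := by linarith [arctan_le_self hy.le, pi_pos]
    rcases le_or_gt (3 * arctan y) (π / 2) with hc0 | hc0
    · nlinarith [mul_nonneg (by nlinarith : 0 ≤ 1 - y ^ 2)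
        (by linarith : 0 ≤ π / 2 - 3 * arctan y)]
    · nlinarith [mul_pos (pow_pos hy 2) (by linarith : 0 < 3 * arctan y - π / 2)]

lemma strictAntiOn_kinkProfile : StrictAntiOn kinkProfile (Ioi 0) := by
  refine strictAntiOn_of_hasDerivWithinAt_neg (convex_Ioi 0)
    (f' := fun y => ((y ^ 2 - 1) * (π / 2 - 3 * arctan y) - 3 * y) / y ^ 2)
    (fun y hy => (hasDerivAt_kinkProfile hy).continuousAt.continuousWithinAt) ?_ ?_
  · intro y hy
    rw [interior_Ioi] at hy ⊢
    exact (hasDerivAt_kinkProfile hy).hasDerivWithinAt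
  · intro y hy
    rw [interior_Ioi] at hy
    exact div_neg_of_neg_of_pos
      (by linarith [sq_sub_one_mul_pi_div_two_sub_three_arctan_lt hy]) (pow_pos hy 2)

lemma continuousOn_kinkProfile : ContinuousOn kinkProfile (Ioi 0) :=
  fun _ hy => (hasDerivAt_kinkProfile hy).continuousAt.continuousWithinAt

lemma tendsto_kinkProfile_nhdsGT_zero : Tendsto kinkProfile (nhdsWithin 0 (Ioi 0)) atTop := by
  have hu : Tendsto (fun y : ℝ => (1 + y ^ 2) / y) (nhdsWithin 0 (Ioi 0)) atTop := by
    have hnum : Tendsto (fun y : ℝ => 1 + y ^ 2) (nhdsWithin 0 (Ioi 0)) (nhds 1) := by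
      simpa using ((by fun_prop : Continuous fun y : ℝ => 1 + y ^ 2).tendsto 0).mono_left
        nhdsWithin_le_nhds
    simpa [div_eq_mul_inv] using hnum.pos_mul_atTop one_pos tendsto_inv_nhdsGT_zero
  have hv :
      Tendsto (fun y : ℝ => π / 2 - 3 * arctan y) (nhdsWithin 0 (Ioi 0)) (nhds (π / 2)) := by
    simpa using ((by fun_prop : Continuous fun y : ℝ => π / 2 - 3 * arctan y).tendsto
      0).mono_left nhdsWithin_le_nhds
  refine (hu.atTop_mul_pos (by positivity) hv).congr' ?_
  filter_upwards [self_mem_nhdsWithin] with y hy using (kinkProfile_eq hy).symm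

lemma tendsto_kinkProfile_atTop : Tendsto kinkProfile atTop atBot := by
  have hu : Tendsto (fun y : ℝ => (1 + y ^ 2) / y) atTop atTop := by
    refine tendsto_atTop_mono' atTop ?_ tendsto_id
    filter_upwards [eventually_gt_atTop 0] with y hy
    rw [id, le_div_iff₀ hy]
    nlinarith
  have hv : Tendsto (fun y : ℝ => π / 2 - 3 * arctan y) atTop (nhds (π / 2 - 3 * (π / 2))) :=
    tendsto_const_nhds.sub (tendsto_const_nhds.mul (tendsto_arctan_atTop.mono_right
      nhdsWithin_le_nhds))
  refine (hu.atTop_mul_neg (by linarith [pi_pos]) hv).congr' ?_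
  filter_upwards [eventually_gt_atTop 0] with y hy using (kinkProfile_eq hy).symm

lemma kinkProfile_tan_pi_div_six : kinkProfile (tan (π / 6)) = 0 := by
  have hpos : 0 < tan (π / 6) := by rw [tan_pi_div_six]; positivity
  rw [kinkProfile_eq hpos, arctan_tan (by linarith [pi_pos]) (by linarith [pi_pos])]
  ring

lemma tan_pi_div_six_mem_Ioo : tan (π / 6) ∈ Ioo 0 1 := by
  rw [tan_pi_div_six]
  refine ⟨by positivity, (div_lt_one (by positivity)).2 ?_⟩
  rw [Real.lt_sqrt zero_le_one]
  norm_num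

lemma kinkProfile_one : kinkProfile 1 = -(π / 2) := by
  rw [kinkProfile_eq one_pos, arctan_one]
  ring

lemma StrictAntiOn.existsUnique_eq_of_tendsto_Ioi {f : ℝ → ℝ} {a : ℝ}
    (hanti : StrictAntiOn f (Ioi a)) (hcont : ContinuousOn f (Ioi a))
    (hleft : Tendsto f (nhdsWithin a (Ioi a)) atTop) (hright : Tendsto f atTop atBot) (c : ℝ) :
    ∃! y, a < y ∧ f y = c := by
  obtain ⟨x₀, hcx₀, hx₀⟩ := ((hleft.eventually_ge_atTop c).and self_mem_nhdsWithin).exists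
  obtain ⟨x₁, hx₁c, hx₀₁⟩ :=
    ((hright.eventually_le_atBot c).and (eventually_ge_atTop x₀)).exists
  have hsub : Icc x₀ x₁ ⊆ Ioi a := fun x hx => lt_of_lt_of_le hx₀ hx.1
  obtain ⟨y, hy, hfy⟩ := intermediate_value_Icc' hx₀₁ (hcont.mono hsub) ⟨hx₁c, hcx₀⟩
  exact ⟨y, ⟨hsub hy, hfy⟩,
    fun z ⟨hz, hfz⟩ => hanti.injOn hz (hsub hy) (hfz.trans hfy.symm)⟩

theorem stmt_6 :
    StrictAntiOn (fun y : ℝ => -((1 + y ^ 2) / y) * (2 * arctan y - arctan (1 / y))) (Ioi 0) ∧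
    (∃! y : ℝ, y ∈ Ioo (0 : ℝ) 1 ∧
      -((1 + y ^ 2) / y) * (2 * arctan y - arctan (1 / y)) = 0) ∧
    Tendsto (fun y : ℝ => -((1 + y ^ 2) / y) * (2 * arctan y - arctan (1 / y)))
      (nhdsWithin 0 (Ioi 0)) atTop ∧
    Tendsto (fun y : ℝ => -((1 + y ^ 2) / y) * (2 * arctan y - arctan (1 / y))) atTop atBot ∧
    (∀ lam : ℝ, ∃! y : ℝ, 0 < y ∧
      -((1 + y ^ 2) / y) * (2 * arctan y - arctan (1 / y)) = lam) ∧
    -((1 + (1 : ℝ) ^ 2) / 1) * (2 * arctan 1 - arctan (1 / 1)) = -(π / 2) := by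
  have hbij := strictAntiOn_kinkProfile.existsUnique_eq_of_tendsto_Ioi continuousOn_kinkProfile
    tendsto_kinkProfile_nhdsGT_zero tendsto_kinkProfile_atTop
  refine ⟨strictAntiOn_kinkProfile, ?_, tendsto_kinkProfile_nhdsGT_zero,
    tendsto_kinkProfile_atTop, hbij, kinkProfile_one⟩
  refine ⟨tan (π / 6), ⟨tan_pi_div_six_mem_Ioo, kinkProfile_tan_pi_div_six⟩, ?_⟩
  rintro y ⟨hy, hFy⟩
  exact (hbij 0).unique ⟨hy.1, hFy⟩ ⟨tan_pi_div_six_mem_Ioo.1, kinkProfile_tan_pi_div_six⟩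
end

section
/- Let φ be a C³ solution of -c²φ'' + sin(φ) = 0 with φ' nowhere vanishing on an interval I. Then for every C² function ψ on I, (-c²ψ'' + cos(φ)ψ) = -(1/φ')·(c²·(φ')²·(ψ/φ')')'. -/
open Real Set

theorem stmt_9 (c : ℝ) (hc : 0 < c) (I : Set ℝ) (hI : IsOpen I)
    (φ ψ : ℝ → ℝ)
    (hφ : ContDiffOn ℝ 3 φ I) (hψ : ContDiffOn ℝ 2 ψ I)
    (heq : ∀ x ∈ I, -c ^ 2 * deriv (deriv φ) x + sin (φ x) = 0)
    (hφ' : ∀ x ∈ I, deriv φ x ≠ 0) :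
    ∀ x ∈ I,
      -c ^ 2 * deriv (deriv ψ) x + cos (φ x) * ψ x
        = -(1 / deriv φ x) *
            deriv (fun y => c ^ 2 * (deriv φ y) ^ 2 *
              deriv (fun z => ψ z / deriv φ z) y) x := by
  intro x hx
  have hc0 : c ≠ 0 := ne_of_gt hc
  -- differentiability facts
  have hφ1 : ContDiffOn ℝ 2 (deriv φ) I := by
    have := hφ.deriv_of_isOpen (m := 2) hI (by norm_num)
    norm_num at this; exact this
  have hφ2 : ContDiffOn ℝ 1 (deriv (deriv φ)) I := by
    have := hφ1.deriv_of_isOpen (m := 1) hI (by norm_num)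
    norm_num at this; exact this
  have hψ1 : ContDiffOn ℝ 1 (deriv ψ) I := by
    have := hψ.deriv_of_isOpen (m := 1) hI (by norm_num)
    norm_num at this; exact this
  have hφd : ∀ y ∈ I, HasDerivAt φ (deriv φ y) y := fun y hy =>
    ((hφ.differentiableOn (by norm_num)).differentiableAt (hI.mem_nhds hy)).hasDerivAt
  have hφ1d : ∀ y ∈ I, HasDerivAt (deriv φ) (deriv (deriv φ) y) y := fun y hy =>
    ((hφ1.differentiableOn (by norm_num)).differentiableAt (hI.mem_nhds hy)).hasDerivAt
  have hψd : ∀ y ∈ I, HasDerivAt ψ (deriv ψ y) y := fun y hy =>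
    ((hψ.differentiableOn (by norm_num)).differentiableAt (hI.mem_nhds hy)).hasDerivAt
  have hψ1d : ∀ y ∈ I, HasDerivAt (deriv ψ) (deriv (deriv ψ) y) y := fun y hy =>
    ((hψ1.differentiableOn (by norm_num)).differentiableAt (hI.mem_nhds hy)).hasDerivAt
  -- φ'' = sin φ / c² on I
  have hv : ∀ y ∈ I, deriv (deriv φ) y = sin (φ y) / c ^ 2 := by
    intro y hy
    have := heq y hy
    field_simp at this ⊢
    linarith
  -- φ''' at x
  have hφ2x : HasDerivAt (deriv (deriv φ)) (cos (φ x) * deriv φ x / c ^ 2) x := by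
    have h1 : HasDerivAt (fun y => sin (φ y) / c ^ 2)
        (cos (φ x) * deriv φ x / c ^ 2) x := by
      have := ((Real.hasDerivAt_sin (φ x)).comp x (hφd x hx)).div_const (c ^ 2)
      exact this
    apply h1.congr_of_eventuallyEq
    filter_upwards [hI.mem_nhds hx] with y hy using hv y hy
  -- deriv of ψ/φ' on I
  have hg : ∀ y ∈ I, deriv (fun z => ψ z / deriv φ z) y
      = (deriv ψ y * deriv φ y - ψ y * deriv (deriv φ) y) / (deriv φ y) ^ 2 := by
    intro y hy
    exact ((hψd y hy).div (hφ1d y hy) (hφ' y hy)).deriv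
  -- F eventually equals G
  have hFG : (fun y => c ^ 2 * (deriv φ y) ^ 2 * deriv (fun z => ψ z / deriv φ z) y)
      =ᶠ[nhds x] (fun y => c ^ 2 * (deriv ψ y * deriv φ y - ψ y * deriv (deriv φ) y)) := by
    filter_upwards [hI.mem_nhds hx] with y hy
    rw [hg y hy]
    field_simp [hφ' y hy]
  have hGd : HasDerivAt (fun y => c ^ 2 * (deriv ψ y * deriv φ y - ψ y * deriv (deriv φ) y))
      (c ^ 2 * ((deriv (deriv ψ) x * deriv φ x + deriv ψ x * deriv (deriv φ) x)
        - (deriv ψ x * deriv (deriv φ) x + ψ x * (cos (φ x) * deriv φ x / c ^ 2)))) x := by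
    exact (((hψ1d x hx).mul (hφ1d x hx)).sub ((hψd x hx).mul hφ2x)).const_mul (c ^ 2)
  have hder : deriv (fun y => c ^ 2 * (deriv φ y) ^ 2 *
      deriv (fun z => ψ z / deriv φ z) y) x
      = c ^ 2 * ((deriv (deriv ψ) x * deriv φ x + deriv ψ x * deriv (deriv φ) x)
        - (deriv ψ x * deriv (deriv φ) x + ψ x * (cos (φ x) * deriv φ x / c ^ 2))) := by
    rw [hFG.deriv_eq]
    exact hGd.deriv
  rw [hder]
  have hu := hφ' x hx
  field_simp
  ring
end

section
/- Let φ solve -c²φ'' + sin(φ) = 0 on (0,∞) with φ' nowhere zero, and let ψ ∈ C²(0,∞) with ψ, ψ' decaying at infinity and ψ'(0+) = 0. Then ∫₀^∞ (-c²ψ'' + cos(φ)ψ)·ψ dx = ∫₀^∞ c²(φ')²·((ψ/φ')')² dx - c²·ψ(0)²·φ''(0)/φ'(0). -/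
/-!
Both sides differ by the integral of the derivative of the boundary term
`c²ψψ' - c²ψ²φ''/φ'`; differentiating it uses `c²φ''' = cos φ · φ'`, and its value at `0` is
`-c²ψ(0)²φ''(0)/φ'(0)` since `ψ'(0) = 0`. It vanishes at infinity because `φ''/φ'` stays bounded.
By conservation of the energy `E = c²φ'²/2 + cos φ`, `(φ''/φ')² = sin²φ / (2c²(E - cos φ))`, which
is at most `1/c²` when `E ≥ 1`. When `E < 1`, `cos φ < 1` traps the monotone function `φ` between
two consecutive multiples of `2π`, so `φ → L`; then `φ'` cannot tend to `0`, for otherwise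
`φ'' → sin L / c² ≠ 0`.
-/

open Real Set Filter MeasureTheory Topology

theorem eq_zero_of_tendsto_of_tendsto_deriv {f f' : ℝ → ℝ} {a b : ℝ}
    (hf : ∀ x, HasDerivAt f (f' x) x) (hfa : Tendsto f atTop (𝓝 a))
    (hf'b : Tendsto f' atTop (𝓝 b)) : b = 0 := by
  have hslope : ∀ x, ∃ ξ ∈ Ioo x (x + 1), f' ξ = f (x + 1) - f x := fun x => by
    simpa using exists_hasDerivAt_eq_slope f f' (lt_add_one x)
      (fun t _ => (hf t).continuousAt.continuousWithinAt) (fun t _ => hf t)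
  choose ξ hξ hξ_eq using hslope
  have hξ_top : Tendsto ξ atTop atTop :=
    tendsto_atTop_mono (fun x => (hξ x).1.le) tendsto_id
  have hdiff : Tendsto (f' ∘ ξ) atTop (𝓝 0) := by
    rw [show f' ∘ ξ = fun x => f (x + 1) - f x from funext hξ_eq]
    simpa using (hfa.comp (tendsto_atTop_add_const_right _ 1 tendsto_id)).sub hfa
  exact tendsto_nhds_unique (hf'b.comp hξ_top) hdiff

theorem monotoneOn_or_antitoneOn_of_deriv_ne_zero {f : ℝ → ℝ} {s : Set ℝ} (hs : Convex ℝ s)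
    (hf : Differentiable ℝ f) (hf' : ∀ x ∈ s, deriv f x ≠ 0) :
    MonotoneOn f s ∨ AntitoneOn f s := by
  rcases hasDerivWithinAt_forall_lt_or_forall_gt_of_forall_ne hs
    (fun x _ => (hf x).hasDerivAt.hasDerivWithinAt) hf' with hneg | hpos
  · exact .inr <| antitoneOn_of_deriv_nonpos hs hf.continuous.continuousOn hf.differentiableOn
      fun x hx => (hneg x (interior_subset hx)).le
  · exact .inl <| monotoneOn_of_deriv_nonneg hs hf.continuous.continuousOn hf.differentiableOn
      fun x hx => (hpos x (interior_subset hx)).le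

theorem exists_tendsto_atTop_of_monotoneOn_or_antitoneOn_Ici {f : ℝ → ℝ} {a : ℝ}
    (hf : MonotoneOn f (Ici a) ∨ AntitoneOn f (Ici a))
    (hbdd : Bornology.IsBounded (f '' Ici a)) : ∃ L, Tendsto f atTop (𝓝 L) := by
  simp_rw [← tendsto_comp_val_Ici_atTop (a := a)]
  rw [image_eq_range] at hbdd
  rcases hf with hmono | hanti
  · exact ⟨_, tendsto_atTop_ciSup (fun x y hxy => hmono x.2 y.2 hxy) hbdd.bddAbove⟩
  · exact ⟨_, tendsto_atTop_ciInf (fun x y hxy => hanti x.2 y.2 hxy) hbdd.bddBelow⟩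

theorem IsPreconnected.isBounded_of_cos_lt_one {s : Set ℝ} (hs : IsPreconnected s)
    (hcos : ∀ y ∈ s, cos y < 1) : Bornology.IsBounded s := by
  rcases s.eq_empty_or_nonempty with rfl | ⟨y₀, hy₀⟩
  · exact Bornology.isBounded_empty
  have hnot : ∀ n : ℤ, (n * (2 * π) : ℝ) ∉ s := fun n hn =>
    (hcos _ hn).ne (cos_int_mul_two_pi n)
  set k := ⌊y₀ / (2 * π)⌋
  have hk : k * (2 * π) ≤ y₀ := (le_div_iff₀ two_pi_pos).1 (Int.floor_le _)
  have hk' : y₀ < (k + 1 : ℤ) * (2 * π) := by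
    push_cast
    exact (div_lt_iff₀ two_pi_pos).1 (Int.lt_floor_add_one _)
  refine (Metric.isBounded_Icc (k * (2 * π) : ℝ) ((k + 1 : ℤ) * (2 * π))).subset
    fun y hy => ⟨?_, ?_⟩
  · by_contra! h
    exact hnot k (hs.Icc_subset hy hy₀ ⟨h.le, hk⟩)
  · by_contra! h
    exact hnot (k + 1) (hs.Icc_subset hy₀ hy ⟨hk'.le, h.le⟩)

theorem abs_div_le_of_one_le_energy {c p q θ : ℝ} (hc : 0 < c) (hp : p ≠ 0)
    (hq : c ^ 2 * q = sin θ) (hE : 1 ≤ c ^ 2 * p ^ 2 / 2 + cos θ) : |q / p| ≤ 1 / c := by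
  have hsin : sin θ ^ 2 ≤ (c * p) ^ 2 := by
    nlinarith [sin_sq_add_cos_sq θ, sq_nonneg (1 - cos θ)]
  have hsin' : |sin θ| ≤ c * |p| := by
    simpa [abs_mul, abs_of_pos hc] using sq_le_sq.1 hsin
  have hq' : c ^ 2 * |q| = |sin θ| := by
    rw [← hq, abs_mul, abs_of_pos (pow_pos hc 2)]
  rw [abs_div, div_le_div_iff₀ (abs_pos.2 hp) hc, one_mul]
  nlinarith

section SineGordon

variable {c : ℝ} {φ : ℝ → ℝ}

theorem sineGordon_energy_eq (hφ : ContDiff ℝ 2 φ)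
    (heq : ∀ x ≥ 0, -c ^ 2 * deriv (deriv φ) x + sin (φ x) = 0) {x : ℝ} (hx : 0 ≤ x) :
    c ^ 2 * deriv φ x ^ 2 / 2 + cos (φ x) = c ^ 2 * deriv φ 0 ^ 2 / 2 + cos (φ 0) := by
  have hderiv : ∀ y ≥ 0,
      HasDerivAt (fun y => c ^ 2 * deriv φ y ^ 2 / 2 + cos (φ y)) 0 y := fun y hy => by
    have h := ((((hφ.differentiable_deriv_two y).hasDerivAt.pow 2).const_mul (c ^ 2)).div_const
      2).add (hφ.differentiable (by norm_num) y).hasDerivAt.cos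
    refine h.congr_deriv ?_
    norm_num
    linear_combination (-deriv φ y) * heq y hy
  exact constant_of_has_deriv_right_zero
    (fun y hy => (hderiv y hy.1).continuousAt.continuousWithinAt)
    (fun y hy => (hderiv y hy.1).hasDerivWithinAt) x ⟨hx, le_rfl⟩

theorem sineGordon_exists_pos_tendsto_abs_deriv (hc : c ≠ 0) (hφ : ContDiff ℝ 2 φ)
    (heq : ∀ x ≥ 0, -c ^ 2 * deriv (deriv φ) x + sin (φ x) = 0)
    (hφ' : ∀ x ≥ 0, deriv φ x ≠ 0) (hE : c ^ 2 * deriv φ 0 ^ 2 / 2 + cos (φ 0) < 1) :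
    ∃ ℓ > 0, Tendsto (fun x => |deriv φ x|) atTop (𝓝 ℓ) := by
  set E := c ^ 2 * deriv φ 0 ^ 2 / 2 + cos (φ 0)
  have hφd : Differentiable ℝ φ := hφ.differentiable (by norm_num)
  have hpd : Differentiable ℝ (deriv φ) := hφ.differentiable_deriv_two
  have henergy : ∀ x ≥ 0, c ^ 2 * deriv φ x ^ 2 / 2 + cos (φ x) = E := fun x hx =>
    sineGordon_energy_eq hφ heq hx
  have hcos_lt : ∀ x ≥ 0, cos (φ x) < E := fun x hx => by
    have := hφ' x hx
    have : 0 < c ^ 2 * deriv φ x ^ 2 / 2 := by positivity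
    linarith [henergy x hx]
  obtain ⟨L, hL⟩ : ∃ L, Tendsto φ atTop (𝓝 L) :=
    exists_tendsto_atTop_of_monotoneOn_or_antitoneOn_Ici
      (monotoneOn_or_antitoneOn_of_deriv_ne_zero (convex_Ici 0) hφd hφ')
      ((isPreconnected_Ici.image φ hφd.continuous.continuousOn).isBounded_of_cos_lt_one
        (by rintro _ ⟨x, hx, rfl⟩; exact (hcos_lt x hx).trans hE))
  have hcosL : Tendsto (fun x => cos (φ x)) atTop (𝓝 (cos L)) :=
    (continuous_cos.tendsto L).comp hL
  have hp_abs : Tendsto (fun x => |deriv φ x|) atTop (𝓝 √(2 * (E - cos L) / c ^ 2)) := by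
    refine (((tendsto_const_nhds.sub hcosL).const_mul 2).div_const _).sqrt.congr'
      (eventually_ge_atTop 0 |>.mono fun x hx => ?_)
    show _ = |deriv φ x|
    rw [← sqrt_sq_eq_abs, ← henergy x hx]
    congr 1
    field_simp
    ring
  refine ⟨_, lt_of_le_of_ne (sqrt_nonneg _) fun hℓ => ?_, hp_abs⟩
  have hp_lim : Tendsto (deriv φ) atTop (𝓝 0) :=
    tendsto_zero_iff_abs_tendsto_zero _ |>.2 (hℓ ▸ hp_abs)
  have hq_lim : Tendsto (deriv (deriv φ)) atTop (𝓝 (sin L / c ^ 2)) :=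
    (((continuous_sin.tendsto L).comp hL).div_const _).congr'
      (eventually_ge_atTop 0 |>.mono fun x hx => by
        rw [Function.comp_apply, div_eq_iff (pow_ne_zero 2 hc)]
        linarith [heq x hx])
  have hsinL : sin L = 0 := by
    simpa [hc] using
      eq_zero_of_tendsto_of_tendsto_deriv (fun x => (hpd x).hasDerivAt) hp_lim hq_lim
  have hcosL_le : cos L ≤ E :=
    le_of_tendsto hcosL (eventually_ge_atTop 0 |>.mono fun x hx => (hcos_lt x hx).le)
  have hE_le : E ≤ cos L := by
    have h : 2 * (E - cos L) / c ^ 2 ≤ 0 := sqrt_eq_zero'.1 hℓ.symm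
    rw [div_le_iff₀ (by positivity), zero_mul] at h
    linarith
  have hE_gt : -1 < E := (neg_one_le_cos _).trans_lt (hcos_lt 0 le_rfl)
  nlinarith [sin_sq_add_cos_sq L]

theorem sineGordon_isBoundedUnder_deriv_div (hc : 0 < c) (hφ : ContDiff ℝ 2 φ)
    (heq : ∀ x ≥ 0, -c ^ 2 * deriv (deriv φ) x + sin (φ x) = 0)
    (hφ' : ∀ x ≥ 0, deriv φ x ≠ 0) :
    IsBoundedUnder (· ≤ ·) atTop (fun x => ‖deriv (deriv φ) x / deriv φ x‖) := by
  have hq : ∀ x ≥ 0, c ^ 2 * deriv (deriv φ) x = sin (φ x) := fun x hx => by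
    linarith [heq x hx]
  by_cases hE : 1 ≤ c ^ 2 * deriv φ 0 ^ 2 / 2 + cos (φ 0)
  · refine isBoundedUnder_of_eventually_le (a := 1 / c)
      (eventually_ge_atTop 0 |>.mono fun x hx => ?_)
    refine abs_div_le_of_one_le_energy hc (hφ' x hx) (hq x hx) ?_
    rwa [sineGordon_energy_eq hφ heq hx]
  · obtain ⟨ℓ, hℓ, hp⟩ :=
      sineGordon_exists_pos_tendsto_abs_deriv hc.ne' hφ heq hφ' (not_le.1 hE)
    refine isBoundedUnder_of_eventually_le (a := 1 / c ^ 2 / (ℓ / 2)) ?_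
    filter_upwards [eventually_ge_atTop 0, hp.eventually_const_le (half_lt_self hℓ)]
      with x hx hpx
    have hq_le : |deriv (deriv φ) x| ≤ 1 / c ^ 2 := by
      rw [eq_div_of_mul_eq (pow_ne_zero 2 hc.ne') ((mul_comm _ _).trans (hq x hx)), abs_div,
        abs_of_pos (pow_pos hc 2)]
      gcongr
      exact abs_sin_le_one _
    rw [norm_div, Real.norm_eq_abs, Real.norm_eq_abs]
    exact div_le_div₀ (by positivity) hq_le (half_pos hℓ) hpx

end SineGordon

noncomputable def sineGordonBoundaryTerm (c : ℝ) (φ ψ : ℝ → ℝ) (x : ℝ) : ℝ :=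
  c ^ 2 * (ψ x * deriv ψ x) - c ^ 2 * (ψ x ^ 2 * (deriv (deriv φ) x / deriv φ x))

section BoundaryTerm

variable {c : ℝ} {φ ψ : ℝ → ℝ}

theorem continuousAt_sineGordonBoundaryTerm (hφ : ContDiff ℝ 2 φ) (hψ : ContDiff ℝ 1 ψ)
    {x : ℝ} (hpx : deriv φ x ≠ 0) : ContinuousAt (sineGordonBoundaryTerm c φ ψ) x := by
  have hψc : Continuous ψ := hψ.continuous
  have hψ'c : Continuous (deriv ψ) := hψ.continuous_deriv le_rfl
  have hpc : Continuous (deriv φ) := hφ.continuous_deriv (by norm_num)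
  have hqc : Continuous (deriv (deriv φ)) := (hφ.deriv' (n := 1)).continuous_deriv le_rfl
  unfold sineGordonBoundaryTerm
  fun_prop (disch := exact hpx)

theorem tendsto_sineGordonBoundaryTerm_atTop (hψ : Tendsto ψ atTop (𝓝 0))
    (hψ' : Tendsto (deriv ψ) atTop (𝓝 0))
    (hqp : IsBoundedUnder (· ≤ ·) atTop (fun x => ‖deriv (deriv φ) x / deriv φ x‖)) :
    Tendsto (sineGordonBoundaryTerm c φ ψ) atTop (𝓝 0) := by
  have hψ_sq : Tendsto (fun x => ψ x ^ 2) atTop (𝓝 0) := by simpa using hψ.pow 2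
  have h := ((hψ.mul hψ').const_mul (c ^ 2)).sub
    ((hψ_sq.zero_mul_isBoundedUnder_le hqp).const_mul (c ^ 2))
  simp only [mul_zero, sub_zero] at h
  exact h

theorem hasDerivAt_sineGordonBoundaryTerm (hc : c ≠ 0) (hφ : ContDiff ℝ 2 φ)
    (hψ : ContDiff ℝ 2 ψ) (heq : ∀ x ≥ 0, -c ^ 2 * deriv (deriv φ) x + sin (φ x) = 0)
    {x : ℝ} (hx : 0 < x) (hpx : deriv φ x ≠ 0) :
    HasDerivAt (sineGordonBoundaryTerm c φ ψ)
      (c ^ 2 * deriv φ x ^ 2 * deriv (fun y => ψ y / deriv φ y) x ^ 2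
        - (-c ^ 2 * deriv (deriv ψ) x + cos (φ x) * ψ x) * ψ x) x := by
  have hφd : Differentiable ℝ φ := hφ.differentiable (by norm_num)
  have hpd : Differentiable ℝ (deriv φ) := hφ.differentiable_deriv_two
  have hψd : Differentiable ℝ ψ := hψ.differentiable (by norm_num)
  have hψ'd : Differentiable ℝ (deriv ψ) := hψ.differentiable_deriv_two
  have hq : HasDerivAt (deriv (deriv φ)) (cos (φ x) * deriv φ x / c ^ 2) x := by
    refine ((hφd x).hasDerivAt.sin.div_const (c ^ 2)).congr_of_eventuallyEq ?_
    filter_upwards [Ioi_mem_nhds hx] with y hy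
    show deriv (deriv φ) y = sin (φ y) / c ^ 2
    rw [eq_div_iff (pow_ne_zero 2 hc)]
    linarith [heq y (le_of_lt hy)]
  have hw : deriv (fun y => ψ y / deriv φ y) x
      = (deriv ψ x * deriv φ x - ψ x * deriv (deriv φ) x) / deriv φ x ^ 2 :=
    ((hψd x).hasDerivAt.div (hpd x).hasDerivAt hpx).deriv
  refine ((((hψd x).hasDerivAt.mul (hψ'd x).hasDerivAt).const_mul (c ^ 2)).sub
    ((((hψd x).hasDerivAt.pow 2).mul (hq.div (hpd x).hasDerivAt hpx)).const_mul
      (c ^ 2))).congr_deriv ?_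
  simp only [Pi.pow_apply, Pi.div_apply, hw]
  field_simp
  ring

end BoundaryTerm

theorem stmt_10 (c : ℝ) (hc : 0 < c) (φ ψ : ℝ → ℝ)
    (hφ : ContDiff ℝ 3 φ) (hψ : ContDiff ℝ 2 ψ)
    (heq : ∀ x ≥ 0, -c ^ 2 * deriv (deriv φ) x + sin (φ x) = 0)
    (hφ' : ∀ x ≥ 0, deriv φ x ≠ 0)
    (hψ0 : deriv ψ 0 = 0)
    (hdecay1 : Tendsto ψ atTop (nhds 0))
    (hdecay2 : Tendsto (deriv ψ) atTop (nhds 0))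
    (hint1 : IntegrableOn
      (fun x => (-c ^ 2 * deriv (deriv ψ) x + cos (φ x) * ψ x) * ψ x) (Ioi 0))
    (hint2 : IntegrableOn
      (fun x => c ^ 2 * (deriv φ x) ^ 2 *
        (deriv (fun y => ψ y / deriv φ y) x) ^ 2) (Ioi 0)) :
    ∫ x in Ioi 0, (-c ^ 2 * deriv (deriv ψ) x + cos (φ x) * ψ x) * ψ x
      = (∫ x in Ioi 0, c ^ 2 * (deriv φ x) ^ 2 *
          (deriv (fun y => ψ y / deriv φ y) x) ^ 2)
        - c ^ 2 * (ψ 0) ^ 2 * deriv (deriv φ) 0 / deriv φ 0 := by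
  have hφ₂ : ContDiff ℝ 2 φ := hφ.of_le (by norm_num)
  have hFTC := integral_Ioi_of_hasDerivAt_of_tendsto
    (continuousAt_sineGordonBoundaryTerm hφ₂ (hψ.of_le (by norm_num))
      (hφ' 0 le_rfl)).continuousWithinAt
    (fun x hx => hasDerivAt_sineGordonBoundaryTerm hc.ne' hφ₂ hψ heq hx (hφ' x hx.out.le))
    (hint2.sub hint1)
    (tendsto_sineGordonBoundaryTerm_atTop hdecay1 hdecay2
      (sineGordon_isBoundedUnder_deriv_div hc hφ₂ heq hφ'))
  rw [integral_sub hint2 hint1, sineGordonBoundaryTerm, hψ0] at hFTC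
  linear_combination -hFTC
end

section
/- Let c₁, c₂, c₃ > 0 and λ < 0. Set α = (c₁ + c₂ + c₃)/λ. Then the vector function Φ = (Φ₁, Φ₂, Φ₃) with Φ₁(x) = -e^{-(α/c₁)x} for x < 0 and Φⱼ(x) = e^{(α/cⱼ)x} for x > 0 (j = 2,3) belongs to L² on each edge, satisfies -cⱼ²Φⱼ'' = -(1/λ²)(c₁+c₂+c₃)²·Φⱼ on each edge, and satisfies the δ'-vertex conditions c₁Φ₁'(0-) = c₂Φ₂'(0+) = c₃Φ₃'(0+) and c₂Φ₂(0+) + c₃Φ₃(0+) - c₁Φ₁(0-) = λ·c₁Φ₁'(0-). -/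
/-!
Each `Φⱼ` is an exponential `e^{kx}` whose rate has the sign that makes it decay on its edge, and
`-c² (e^{kx})'' = -c²k² e^{kx}`. With `k = ±α/cⱼ` this is `-α² = -(c₁+c₂+c₃)²/λ²` on every edge;
`cⱼ Φⱼ'(0) = α` for all `j`, and `αλ = c₁ + c₂ + c₃` is exactly the jump condition.
-/

open Real Set MeasureTheory

lemma deriv_exp_mul (k : ℝ) : deriv (fun x => exp (k * x)) = fun x => k * exp (k * x) := by
  funext x
  rw [(((hasDerivAt_id' x).const_mul k).exp).deriv, mul_one, mul_comm]

lemma exp_mul_sq (k : ℝ) : (fun x => exp (k * x) ^ 2) = fun x => exp ((2 * k) * x) := by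
  funext x
  rw [← exp_nat_mul]
  ring_nf

lemma integrableOn_exp_mul_sq_Ioi {k : ℝ} (hk : k < 0) :
    IntegrableOn (fun x => exp (k * x) ^ 2) (Ioi 0) := by
  rw [exp_mul_sq]
  exact integrableOn_exp_mul_Ioi (by linarith) 0

lemma integrableOn_exp_mul_sq_Iio {k : ℝ} (hk : 0 < k) :
    IntegrableOn (fun x => exp (k * x) ^ 2) (Iio 0) := by
  rw [exp_mul_sq]
  exact (integrableOn_exp_mul_Iic (by linarith) 0).mono_set Iio_subset_Iic_self

theorem stmt_12 (c₁ c₂ c₃ lam : ℝ) (hc₁ : 0 < c₁) (hc₂ : 0 < c₂) (hc₃ : 0 < c₃)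
    (hlam : lam < 0) :
    let α := (c₁ + c₂ + c₃) / lam
    let Φ₁ : ℝ → ℝ := fun x => -exp (-(α / c₁) * x)
    let Φ₂ : ℝ → ℝ := fun x => exp ((α / c₂) * x)
    let Φ₃ : ℝ → ℝ := fun x => exp ((α / c₃) * x)
    IntegrableOn (fun x => (Φ₁ x) ^ 2) (Iio 0) ∧
    IntegrableOn (fun x => (Φ₂ x) ^ 2) (Ioi 0) ∧
    IntegrableOn (fun x => (Φ₃ x) ^ 2) (Ioi 0) ∧
    (∀ x < (0 : ℝ), -c₁ ^ 2 * deriv (deriv Φ₁) x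
        = -(1 / lam ^ 2) * (c₁ + c₂ + c₃) ^ 2 * Φ₁ x) ∧
    (∀ x > (0 : ℝ), -c₂ ^ 2 * deriv (deriv Φ₂) x
        = -(1 / lam ^ 2) * (c₁ + c₂ + c₃) ^ 2 * Φ₂ x) ∧
    (∀ x > (0 : ℝ), -c₃ ^ 2 * deriv (deriv Φ₃) x
        = -(1 / lam ^ 2) * (c₁ + c₂ + c₃) ^ 2 * Φ₃ x) ∧
    c₁ * deriv Φ₁ 0 = c₂ * deriv Φ₂ 0 ∧
    c₂ * deriv Φ₂ 0 = c₃ * deriv Φ₃ 0 ∧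
    c₂ * Φ₂ 0 + c₃ * Φ₃ 0 - c₁ * Φ₁ 0 = lam * (c₁ * deriv Φ₁ 0) := by
  intro α Φ₁ Φ₂ Φ₃
  have hα : α < 0 := div_neg_of_pos_of_neg (by linarith) hlam
  have hlam₀ : lam ≠ 0 := hlam.ne
  have hαlam : α * lam = c₁ + c₂ + c₃ := div_mul_cancel₀ _ hlam₀
  simp only [Φ₁, Φ₂, Φ₃, neg_sq, deriv.fun_neg', deriv_exp_mul, deriv_const_mul_field',
    mul_zero, exp_zero, mul_one]
  -- keeps `ring` from unfolding `α`, so that the identities below are polynomial in `α, lam`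
  clear_value α
  refine ⟨integrableOn_exp_mul_sq_Iio (neg_pos.2 (div_neg_of_neg_of_pos hα hc₁)),
    integrableOn_exp_mul_sq_Ioi (div_neg_of_neg_of_pos hα hc₂),
    integrableOn_exp_mul_sq_Ioi (div_neg_of_neg_of_pos hα hc₃),
    fun x _ => ?_, fun x _ => ?_, fun x _ => ?_, by field_simp, by field_simp, ?_⟩
  all_goals field_simp
  · linear_combination (α * lam + (c₁ + c₂ + c₃)) * hαlam
  · linear_combination -(α * lam + (c₁ + c₂ + c₃)) * hαlam
  · linear_combination -(α * lam + (c₁ + c₂ + c₃)) * hαlam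
  · linear_combination -hαlam
end

section
/- Let c₁, c₂, c₃ > 0 and λ > 0. Then the operator H_λ = (-cⱼ² d²/dx²) on the Y-junction with δ'-vertex conditions has no negative eigenvalues: if β > 0 and (u₁,u₂,u₃) with u₁(x) = A e^{(√β/c₁)x} (x<0), uⱼ(x) = Bⱼ e^{-(√β/cⱼ)x} (x>0), satisfies c₁u₁'(0-)=c₂u₂'(0+)=c₃u₃'(0+) and c₂u₂(0+)+c₃u₃(0+)-c₁u₁(0-) = λc₁u₁'(0-), then A = B₂ = B₃ = 0. -/
open Real

lemma deriv_aexp (A k : ℝ) : deriv (fun x : ℝ => A * Real.exp (k * x)) 0 = A * k := by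
  have h := (((Real.hasDerivAt_exp (k*0)).comp 0 (((hasDerivAt_id (0:ℝ)).const_mul k))).const_mul A)
  simpa [Function.comp] using h.deriv

theorem stmt_13 (c₁ c₂ c₃ lam β A B₂ B₃ : ℝ)
    (hc₁ : 0 < c₁) (hc₂ : 0 < c₂) (hc₃ : 0 < c₃) (hlam : 0 < lam) (hβ : 0 < β)
    (u₁ : ℝ → ℝ) (u₂ : ℝ → ℝ) (u₃ : ℝ → ℝ)
    (hu₁ : u₁ = fun x => A * exp ((Real.sqrt β / c₁) * x))
    (hu₂ : u₂ = fun x => B₂ * exp (-(Real.sqrt β / c₂) * x))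
    (hu₃ : u₃ = fun x => B₃ * exp (-(Real.sqrt β / c₃) * x))
    (hbc₁ : c₁ * deriv u₁ 0 = c₂ * deriv u₂ 0)
    (hbc₂ : c₂ * deriv u₂ 0 = c₃ * deriv u₃ 0)
    (hjump : c₂ * u₂ 0 + c₃ * u₃ 0 - c₁ * u₁ 0 = lam * (c₁ * deriv u₁ 0)) :
    A = 0 ∧ B₂ = 0 ∧ B₃ = 0 := by
  have hs : 0 < Real.sqrt β := Real.sqrt_pos.2 hβ
  subst hu₁ hu₂ hu₃
  simp only [deriv_aexp] at hbc₁ hbc₂ hjump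
  simp only [mul_zero, Real.exp_zero, mul_one] at hjump
  have e1 : c₁ * (A * (Real.sqrt β / c₁)) = A * Real.sqrt β := by
    field_simp
  have e2 : c₂ * (B₂ * (-(Real.sqrt β / c₂))) = -(B₂ * Real.sqrt β) := by
    field_simp
  have e3 : c₃ * (B₃ * (-(Real.sqrt β / c₃))) = -(B₃ * Real.sqrt β) := by
    field_simp
  rw [e1, e2] at hbc₁
  rw [e2, e3] at hbc₂
  rw [e1] at hjump
  have h1 : A = -B₂ := by
    have h' : (A + B₂) * Real.sqrt β = 0 := by linear_combination hbc₁
    rcases mul_eq_zero.1 h' with h | h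
    · linarith
    · exact absurd h hs.ne'
  have h2 : B₂ = B₃ := by
    have h' : (B₂ - B₃) * Real.sqrt β = 0 := by linear_combination -hbc₂
    rcases mul_eq_zero.1 h' with h | h
    · linarith
    · exact absurd h hs.ne'
  have hB₂ : B₂ = 0 := by
    rw [h1, ← h2] at hjump
    have h' : B₂ * (c₁ + c₂ + c₃ + lam * Real.sqrt β) = 0 := by linear_combination hjump
    rcases mul_eq_zero.1 h' with h | h
    · exact h
    · nlinarith [mul_pos hlam hs]
  refine ⟨by rw [h1, hB₂]; ring, hB₂, by rw [← h2, hB₂]⟩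
end
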